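/- arXiv:math-ph/0310064 — 2 statements merged into one kernel-verified Lean document; each statement's English description precedes it below -/
import Mathlib

section
/- For all positive reals x and y, (1/m(x,y)) · ( m(x,x,y)/m(x,x) + m(x,y,y)/m(y,y) ) = 1. -/
/-!
Since `m2 x x = 1 / x`, the claim is `x * m3 x x y + y * m3 x y y = m2 x y`. Pointwise,
`x / ((x+t)²(y+t)) + y / ((x+t)(y+t)²) - 1 / ((x+t)(y+t)) = (x y - t²) / ((x+t)(y+t))²`,
which is the derivative of `t / ((x+t)(y+t))`; this vanishes at `0` and at `∞`, so the
integrals over `(0, ∞)` agree.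
-/

open MeasureTheory

noncomputable def m2 (x y : ℝ) : ℝ := ∫ t in Set.Ioi (0:ℝ), 1 / ((x + t) * (y + t))

noncomputable def m3 (x y z : ℝ) : ℝ :=
  ∫ t in Set.Ioi (0:ℝ), 1 / ((x + t) * (y + t) * (z + t))

open Set Filter Topology

section

variable {x y z : ℝ}

lemma tendsto_inv_add_atTop_zero (x : ℝ) : Tendsto (fun t : ℝ => (x + t)⁻¹) atTop (𝓝 0) :=
  tendsto_inv_atTop_zero.comp (tendsto_atTop_add_const_left _ _ tendsto_id)

lemma hasDerivAt_neg_inv_add {t : ℝ} (h : x + t ≠ 0) :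
    HasDerivAt (fun s => -(x + s)⁻¹) (1 / ((x + t) * (x + t))) t := by
  refine (((hasDerivAt_id t).const_add x).fun_inv h).fun_neg.congr_deriv ?_
  simp only [id]
  field_simp

lemma integrableOn_m2_integrand_self (hx : 0 < x) :
    IntegrableOn (fun t => 1 / ((x + t) * (x + t))) (Ioi 0) :=
  integrableOn_Ioi_deriv_of_nonneg'
    (fun t (ht : 0 ≤ t) => hasDerivAt_neg_inv_add (by positivity))
    (fun t (ht : 0 < t) => by positivity) (by simpa using (tendsto_inv_add_atTop_zero x).neg)

lemma m2_self (hx : 0 < x) : m2 x x = x⁻¹ := by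
  rw [m2, integral_Ioi_of_hasDerivAt_of_tendsto'
    (fun t (ht : 0 ≤ t) => hasDerivAt_neg_inv_add (by positivity))
    (integrableOn_m2_integrand_self hx) (by simpa using (tendsto_inv_add_atTop_zero x).neg)]
  simp

lemma integrableOn_m2_integrand (hx : 0 < x) (hy : 0 < y) :
    IntegrableOn (fun t => 1 / ((x + t) * (y + t))) (Ioi 0) := by
  refine (integrableOn_m2_integrand_self (lt_min hx hy)).mono' ?_ ?_
  · refine ContinuousOn.aestronglyMeasurable (fun t (ht : 0 < t) => ?_) measurableSet_Ioi
    exact (continuousAt_const.div (by fun_prop) (by positivity)).continuousWithinAt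
  · refine ae_restrict_of_forall_mem measurableSet_Ioi fun t (ht : 0 < t) => ?_
    rw [Real.norm_of_nonneg (by positivity)]
    have hmin := lt_min hx hy
    gcongr
    exacts [min_le_left x y, min_le_right x y]

lemma integrableOn_m3_integrand (hx : 0 < x) (hy : 0 < y) (hz : 0 < z) :
    IntegrableOn (fun t => 1 / ((x + t) * (y + t) * (z + t))) (Ioi 0) := by
  refine ((integrableOn_m2_integrand hx hy).const_mul z⁻¹).mono' ?_ ?_
  · refine ContinuousOn.aestronglyMeasurable (fun t (ht : 0 < t) => ?_) measurableSet_Ioi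
    exact (continuousAt_const.div (by fun_prop) (by positivity)).continuousWithinAt
  · refine ae_restrict_of_forall_mem measurableSet_Ioi fun t (ht : 0 < t) => ?_
    rw [Real.norm_of_nonneg (by positivity), ← one_div, div_mul_div_comm, one_mul, mul_comm z]
    gcongr
    linarith

lemma inv_max_le_m2 (hx : 0 < x) (hy : 0 < y) : (max x y)⁻¹ ≤ m2 x y := by
  have hmax : 0 < max x y := lt_max_of_lt_left hx
  rw [← m2_self hmax]
  refine setIntegral_mono_on (integrableOn_m2_integrand_self hmax)
    (integrableOn_m2_integrand hx hy) measurableSet_Ioi fun t (ht : 0 < t) => ?_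
  gcongr
  exacts [le_max_left x y, le_max_right x y]

lemma m2_pos (hx : 0 < x) (hy : 0 < y) : 0 < m2 x y :=
  (inv_pos.2 (lt_max_of_lt_left hx)).trans_le (inv_max_le_m2 hx hy)

lemma hasDerivAt_div_mul_add {t : ℝ} (hx : x + t ≠ 0) (hy : y + t ≠ 0) :
    HasDerivAt (fun s => s / ((x + s) * (y + s)))
      (x * (1 / ((x + t) * (x + t) * (y + t))) + y * (1 / ((x + t) * (y + t) * (y + t)))
        - 1 / ((x + t) * (y + t))) t := by
  refine ((hasDerivAt_id t).fun_div
    (((hasDerivAt_id t).const_add x).fun_mul ((hasDerivAt_id t).const_add y))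
    (mul_ne_zero hx hy)).congr_deriv ?_
  simp only [id]
  field_simp
  ring

lemma tendsto_div_mul_add_atTop (hx : 0 ≤ x) (hy : 0 ≤ y) :
    Tendsto (fun t => t / ((x + t) * (y + t))) atTop (𝓝 0) := by
  refine tendsto_of_tendsto_of_tendsto_of_le_of_le' tendsto_const_nhds
    (tendsto_inv_add_atTop_zero y) ?_ ?_ <;>
    filter_upwards [eventually_gt_atTop 0] with t ht
  · positivity
  · rw [div_le_iff₀ (by positivity), mul_comm (x + t), ← mul_assoc, inv_mul_cancel₀ (by positivity)]
    linarith

lemma mul_m3_add_mul_m3 (hx : 0 < x) (hy : 0 < y) : x * m3 x x y + y * m3 x y y = m2 x y := by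
  have hxxy := (integrableOn_m3_integrand hx hx hy).const_mul x
  have hxyy := (integrableOn_m3_integrand hx hy hy).const_mul y
  have hxy := integrableOn_m2_integrand hx hy
  have hftc := integral_Ioi_of_hasDerivAt_of_tendsto'
    (fun t (ht : 0 ≤ t) => hasDerivAt_div_mul_add (x := x) (y := y) (by positivity) (by positivity))
    ((hxxy.fun_add hxyy).sub hxy) (tendsto_div_mul_add_atTop hx.le hy.le)
  rw [integral_sub (hxxy.fun_add hxyy) hxy, integral_add hxxy hxyy, integral_const_mul,
    integral_const_mul, zero_div, sub_zero] at hftc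
  rw [m3, m3, m2]
  linarith

end

theorem stmt_4 (x y : ℝ) (hx : 0 < x) (hy : 0 < y) :
    (1 / m2 x y) * (m3 x x y / m2 x x + m3 x y y / m2 y y) = 1 := by
  rw [m2_self hx, m2_self hy, div_inv_eq_mul, div_inv_eq_mul, mul_comm (m3 x x y),
    mul_comm (m3 x y y), mul_m3_add_mul_m3 hx hy]
  exact one_div_mul_cancel (m2_pos hx hy).ne'
end

section
/- The function τ(c) = −(1/2)·(1+c)²/(1−c)² + (1+c)(1+c²)/(c(c−1)·log c) − (1/2)·(1+c)²/(c·(log c)²) is strictly decreasing on the open interval (0,1). -/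
noncomputable def tau (c : ℝ) : ℝ :=
  -(1 / 2) * (1 + c) ^ 2 / (1 - c) ^ 2 +
    (1 + c) * (1 + c ^ 2) / (c * (c - 1) * Real.log c) -
    (1 / 2) * (1 + c) ^ 2 / (c * (Real.log c) ^ 2)

/-!
Differentiating gives `τ'(c) = P(c, log c) / (c² (c - 1)³ (log c)³)` with `P` cubic in `log c`, and
the denominator is positive on `(0, 1)`. There `log c` is trapped between two rational functions,
`(10c³ + 9c² - 18c - 1) / (3c(c² + 6c + 3)) < log c < 3(c² - 1) / (c² + 4c + 1)`
(the upper one is the `[2/2]` Padé approximant of `log` at `1`), and `P(c, l) < 0` for every `l` in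
this band. Both bounds are equalities at `c = 1`; differentiating the lower one gives a multiple of
the upper one, and differentiating twice more reduces the upper one to the `[1/1]` Padé bound
`log c < 2(c - 1) / (c + 1)`, which in turn follows from `log y < y - 1` at `y = 1 / c`.
-/

open Real Set

lemma neg_of_hasDerivAt_pos_of_right_eq_zero {F F' : ℝ → ℝ} {a b : ℝ}
    (hF : ∀ x ∈ Ioc a b, HasDerivAt F (F' x) x) (hF' : ∀ x ∈ Ioo a b, 0 < F' x)
    (hFb : F b = 0) {x : ℝ} (hx : x ∈ Ioo a b) : F x < 0 := by
  have hmono : StrictMonoOn F (Ioc a b) := by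
    refine strictMonoOn_of_hasDerivWithinAt_pos (f' := F') (convex_Ioc a b)
      (fun y hy ↦ (hF y hy).continuousAt.continuousWithinAt) (fun y hy ↦ ?_) ?_
    · rw [interior_Ioc] at hy ⊢
      exact (hF y (Ioo_subset_Ioc_self hy)).hasDerivWithinAt
    · simpa only [interior_Ioc] using hF'
  exact hFb ▸ hmono (Ioo_subset_Ioc_self hx) (right_mem_Ioc.2 (hx.1.trans hx.2)) hx.2

lemma pos_of_hasDerivAt_neg_of_right_eq_zero {F F' : ℝ → ℝ} {a b : ℝ}
    (hF : ∀ x ∈ Ioc a b, HasDerivAt F (F' x) x) (hF' : ∀ x ∈ Ioo a b, F' x < 0)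
    (hFb : F b = 0) {x : ℝ} (hx : x ∈ Ioo a b) : 0 < F x :=
  neg_neg_iff_pos.1 <| neg_of_hasDerivAt_pos_of_right_eq_zero (F := -F)
    (fun y hy ↦ (hF y hy).neg) (fun y hy ↦ neg_pos.2 (hF' y hy)) (by simp [hFb]) hx

lemma hasDerivAt_mul_log_sub {p q : ℝ → ℝ} {p' q' x : ℝ} (hp : HasDerivAt p p' x)
    (hq : HasDerivAt q q' x) (hx : x ≠ 0) :
    HasDerivAt (fun y ↦ p y * log y - q y) (p' * log x + p x / x - q') x :=
  ((hp.fun_mul (hasDerivAt_log hx)).fun_sub hq).congr_deriv (by rw [div_eq_mul_inv])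

lemma add_one_mul_log_lt {c : ℝ} (hc : c ∈ Ioo (0 : ℝ) 1) :
    (c + 1) * log c < 2 * (c - 1) := by
  have hF : ∀ x ∈ Ioc (0 : ℝ) 1,
      HasDerivAt (fun x ↦ (x + 1) * log x - 2 * (x - 1)) (log x + x⁻¹ - 1) x := fun x hx ↦ by
    have hid := hasDerivAt_id' x
    refine (hasDerivAt_mul_log_sub (hid.add_const 1) ((hid.sub_const 1).const_mul 2)
      hx.1.ne').congr_deriv ?_
    field_simp [hx.1.ne']
    ring
  have hF' : ∀ x ∈ Ioo (0 : ℝ) 1, 0 < log x + x⁻¹ - 1 := fun x hx ↦ by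
    have hlog := log_lt_sub_one_of_pos (inv_pos.2 hx.1) (inv_ne_one.2 hx.2.ne)
    rw [log_inv] at hlog
    linarith
  linarith [neg_of_hasDerivAt_pos_of_right_eq_zero hF hF' (by simp) hc]

lemma quadratic_lt_quadratic_mul_log {c : ℝ} (hc : c ∈ Ioo (0 : ℝ) 1) :
    5 * c ^ 2 - 4 * c - 1 < (2 * c ^ 2 + 4 * c) * log c := by
  have hF : ∀ x ∈ Ioc (0 : ℝ) 1,
      HasDerivAt (fun x ↦ (2 * x ^ 2 + 4 * x) * log x - (5 * x ^ 2 - 4 * x - 1))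
        (4 * ((x + 1) * log x - 2 * (x - 1))) x := fun x hx ↦ by
    have hid := hasDerivAt_id' x
    refine (hasDerivAt_mul_log_sub (((hid.fun_pow 2).const_mul 2).fun_add (hid.const_mul 4))
      ((((hid.fun_pow 2).const_mul 5).fun_sub (hid.const_mul 4)).sub_const 1)
      hx.1.ne').congr_deriv ?_
    field_simp [hx.1.ne']
    ring
  linarith [pos_of_hasDerivAt_neg_of_right_eq_zero hF
    (fun x hx ↦ by linarith [add_one_mul_log_lt hx]) (by norm_num) hc]

lemma quadratic_mul_log_lt {c : ℝ} (hc : c ∈ Ioo (0 : ℝ) 1) :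
    (c ^ 2 + 4 * c + 1) * log c < 3 * (c ^ 2 - 1) := by
  have hF : ∀ x ∈ Ioc (0 : ℝ) 1,
      HasDerivAt (fun x ↦ (x ^ 2 + 4 * x + 1) * log x - 3 * (x ^ 2 - 1))
        (((2 * x ^ 2 + 4 * x) * log x - (5 * x ^ 2 - 4 * x - 1)) / x) x := fun x hx ↦ by
    have hid := hasDerivAt_id' x
    refine (hasDerivAt_mul_log_sub (((hid.fun_pow 2).fun_add (hid.const_mul 4)).add_const 1)
      (((hid.fun_pow 2).sub_const 1).const_mul 3) hx.1.ne').congr_deriv ?_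
    field_simp [hx.1.ne']
    ring
  linarith [neg_of_hasDerivAt_pos_of_right_eq_zero hF
    (fun x hx ↦ div_pos (by linarith [quadratic_lt_quadratic_mul_log hx]) hx.1) (by norm_num) hc]

lemma cubic_lt_cubic_mul_log {c : ℝ} (hc : c ∈ Ioo (0 : ℝ) 1) :
    10 * c ^ 3 + 9 * c ^ 2 - 18 * c - 1 < 3 * c * (c ^ 2 + 6 * c + 3) * log c := by
  have hF : ∀ x ∈ Ioc (0 : ℝ) 1,
      HasDerivAt
        (fun x ↦ 3 * x * (x ^ 2 + 6 * x + 3) * log x - (10 * x ^ 3 + 9 * x ^ 2 - 18 * x - 1))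
        (9 * ((x ^ 2 + 4 * x + 1) * log x - 3 * (x ^ 2 - 1))) x := fun x hx ↦ by
    have hid := hasDerivAt_id' x
    refine (hasDerivAt_mul_log_sub
      ((hid.const_mul 3).fun_mul (((hid.fun_pow 2).fun_add (hid.const_mul 6)).add_const 3))
      (((((hid.fun_pow 3).const_mul 10).fun_add ((hid.fun_pow 2).const_mul 9)).fun_sub
        (hid.const_mul 18)).sub_const 1) hx.1.ne').congr_deriv ?_
    field_simp [hx.1.ne']
    ring
  linarith [pos_of_hasDerivAt_neg_of_right_eq_zero hF
    (fun x hx ↦ by linarith [quadratic_mul_log_lt hx]) (by norm_num) hc]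

noncomputable def tauDerivNumerator (c l : ℝ) : ℝ :=
  2 * c ^ 2 * (1 + c) * l ^ 3 + (c - 1) * (c ^ 4 - 2 * c ^ 3 - 2 * c ^ 2 - 2 * c + 1) * l ^ 2
    - (1 / 2) * (1 + c) * (c - 1) ^ 2 * (3 * c ^ 2 - 2 * c + 3) * l + (1 + c) ^ 2 * (c - 1) ^ 3

lemma tauDerivNumerator_neg {c l : ℝ} (hc : c ∈ Ioo (0 : ℝ) 1)
    (hlu : (c ^ 2 + 4 * c + 1) * l < 3 * (c ^ 2 - 1))
    (hll : 10 * c ^ 3 + 9 * c ^ 2 - 18 * c - 1 < 3 * c * (c ^ 2 + 6 * c + 3) * l) :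
    tauDerivNumerator c l < 0 := by
  obtain ⟨hc0, hc1⟩ := hc
  have hd : 0 < 1 - c := sub_pos.2 hc1
  obtain ⟨u, hu_def, hu⟩ : ∃ u, 3 * (c ^ 2 - 1) - (c ^ 2 + 4 * c + 1) * l = u ∧ 0 < u :=
    ⟨_, rfl, sub_pos.2 hlu⟩
  obtain ⟨v, hv_def, hv⟩ :
      ∃ v, 3 * c * (c ^ 2 + 6 * c + 3) * l - (10 * c ^ 3 + 9 * c ^ 2 - 18 * c - 1) = v ∧ 0 < v :=
    ⟨_, rfl, sub_pos.2 hll⟩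
  -- A Positivstellensatz certificate: a positive combination of products of `c`, `1 - c`, `u`, `v`.
  have key : tauDerivNumerator c l = -(
      67/18 * ((1 - c) ^ 2 * u) + 29/324 * ((1 - c) ^ 5 * u) + 346/27 * (c * (1 - c) ^ 2 * u) +
      103/324 * (c * (1 - c) ^ 5 * u) + 7/54 * (c ^ 4 * (1 - c) ^ 2 * u) +
      741395341/224044704 * ((1 - c) ^ 2 * v) + 17867267/37340784 * ((1 - c) ^ 4 * v) +
      140744569/224044704 * ((1 - c) ^ 6 * v) + 5420339/224044704 * (c ^ 3 * (1 - c) ^ 2 * v) +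
      5420339/74681568 * (c ^ 3 * (1 - c) ^ 3 * v) + 7621/7848 * ((1 - c) ^ 5 * u ^ 2) +
      532/981 * (c * (1 - c) ^ 5 * u ^ 2) + 167/216 * (c ^ 3 * (1 - c) * u ^ 2) +
      19/24 * (c ^ 4 * (1 - c) * u ^ 2) + 41/72 * (c ^ 4 * (1 - c) ^ 2 * u ^ 2) +
      24077/35316 * (u * v) + 53381675/18670392 * (c * (1 - c) ^ 4 * u * v) +
      19016995/9335196 * (c ^ 2 * (1 - c) ^ 4 * u * v) + 98352649/28005588 * (c ^ 5 * u * v) +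
      58337231/28005588 * (c ^ 5 * (1 - c) * u * v) + 36263057/186703920 * ((1 - c) * v ^ 2) +
      30689095/56011176 * ((1 - c) ^ 2 * v ^ 2) +
      37716905041/139467828240 * ((1 - c) ^ 5 * v ^ 2) +
      7360007299/23244638040 * (c * (1 - c) ^ 5 * v ^ 2) + 3914857/4667598 * (c ^ 4 * v ^ 2) +
      127461443/186703920 * (c ^ 4 * (1 - c) * v ^ 2) +
      89177243/280055880 * (c ^ 4 * (1 - c) ^ 2 * v ^ 2) + 227/872 * (c * (1 - c) ^ 3 * u ^ 3) +
      149/872 * (c ^ 2 * (1 - c) ^ 3 * u ^ 3) + 149/2616 * (c ^ 3 * (1 - c) ^ 3 * u ^ 3) +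
      149/2616 * (c ^ 6 * u ^ 3) + 227/7848 * ((1 - c) ^ 6 * u ^ 2 * v) +
      1175/2616 * (c ^ 2 * (1 - c) * u ^ 2 * v) + 9373/23544 * (c ^ 3 * (1 - c) * u ^ 2 * v) +
      227/3924 * (c ^ 3 * (1 - c) ^ 3 * u ^ 2 * v) + 227/7848 * (c ^ 6 * u ^ 2 * v) +
      115/17658 * (u * v ^ 2) + 271163/488538 * (c * u * v ^ 2) +
      1753/651384 * (c ^ 2 * (1 - c) ^ 3 * u * v ^ 2) +
      1753/1954152 * (c ^ 3 * (1 - c) ^ 3 * u * v ^ 2) + 1753/1954152 * (c ^ 6 * u * v ^ 2) +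
      1259201/17587368 * (v ^ 3) + 306086/10992105 * (c * v ^ 3) +
      1753/1954152 * (c * (1 - c) ^ 3 * v ^ 3) + 1753/9770760 * (c * (1 - c) ^ 5 * v ^ 3) +
      211403/17587368 * (c ^ 2 * v ^ 3) + 1753/1954152 * (c ^ 2 * (1 - c) ^ 3 * v ^ 3) +
      1753/9770760 * (c ^ 6 * v ^ 3)) := by
    rw [tauDerivNumerator, ← hu_def, ← hv_def]
    ring
  rw [key]
  exact neg_neg_of_pos (by positivity)

lemma hasDerivAt_tau {c : ℝ} (hc : c ∈ Ioo (0 : ℝ) 1) :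
    HasDerivAt tau (tauDerivNumerator c (log c) / (c ^ 2 * (c - 1) ^ 3 * log c ^ 3)) c := by
  obtain ⟨hc0, hc1⟩ := hc
  have hl : log c ≠ 0 := (log_neg hc0 hc1).ne
  have h1c : 1 - c ≠ 0 := (sub_pos.2 hc1).ne'
  have hc1' : c - 1 ≠ 0 := (sub_neg.2 hc1).ne
  have hlog := hasDerivAt_log hc0.ne'
  have hid := hasDerivAt_id' c
  refine ((((((hid.const_add 1).fun_pow 2).const_mul (-(1 / 2))).fun_div
    ((hid.const_sub 1).fun_pow 2) (by positivity)).fun_add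
      (((hid.const_add 1).fun_mul ((hid.fun_pow 2).const_add 1)).fun_div
        ((hid.fun_mul (hid.sub_const 1)).fun_mul hlog) (by positivity))).fun_sub
    ((((hid.const_add 1).fun_pow 2).const_mul (1 / 2)).fun_div (hid.fun_mul (hlog.fun_pow 2))
      (by positivity))).congr_deriv ?_
  rw [tauDerivNumerator]
  field_simp
  ring

theorem stmt_6 : StrictAntiOn tau (Set.Ioo (0:ℝ) 1) := by
  refine strictAntiOn_of_hasDerivWithinAt_neg
    (f' := fun c ↦ tauDerivNumerator c (log c) / (c ^ 2 * (c - 1) ^ 3 * log c ^ 3))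
    (convex_Ioo 0 1) (fun c hc ↦ (hasDerivAt_tau hc).continuousAt.continuousWithinAt)
    (fun c hc ↦ ?_) (fun c hc ↦ ?_) <;> rw [interior_Ioo] at hc
  · exact (hasDerivAt_tau hc).hasDerivWithinAt
  · have hden : 0 < c ^ 2 * (c - 1) ^ 3 * log c ^ 3 := by
      have h := mul_pos_of_neg_of_neg (sub_neg.2 hc.2) (log_neg hc.1 hc.2)
      calc 0 < c ^ 2 * ((c - 1) * log c) ^ 3 := mul_pos (pow_pos hc.1 2) (pow_pos h 3)
        _ = c ^ 2 * (c - 1) ^ 3 * log c ^ 3 := by ring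
    exact div_neg_of_neg_of_pos
      (tauDerivNumerator_neg hc (quadratic_mul_log_lt hc) (cubic_lt_cubic_mul_log hc)) hden
end
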